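/- arXiv:1903.08138 — 3 statements merged into one kernel-verified Lean document; each statement's English description precedes it below -/
import Mathlib

section
/- Let V be a finite set, H ⊆ 2^V \ {∅} a hypergraph with every vertex covered by some edge. Define the height h(x) of x ∈ ℤ≥0^V as the maximum length of a sequence of moves from x, where a move x → x' chooses an edge H₀ ∈ H and strictly decreases x_i for all i ∈ H₀ while leaving other coordinates unchanged. Then for all positions x, x' we have h(x) ≥ h(x') − ‖x' − x‖₊, where ‖x'−x‖₊ = Σ_{i : x'_i > x_i} (x'_i − x_i). In particular h is monotone: x ≥ x' componentwise implies h(x) ≥ h(x'). -/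
/-- A move in hypergraph Nim: choose an edge `E ∈ H`, strictly decrease all
coordinates in `E`, leave all other coordinates unchanged. -/
def Move {V : Type*} (H : Set (Set V)) (x x' : V → ℕ) : Prop :=
  ∃ E ∈ H, (∀ i ∈ E, x' i < x i) ∧ ∀ i ∉ E, x' i = x i

/-- The height of a position: the maximum number of consecutive moves from `x`. -/
noncomputable def height {V : Type*} (H : Set (Set V)) (x : V → ℕ) : ℕ :=
  sSup {n : ℕ | ∃ f : ℕ → V → ℕ, f 0 = x ∧ ∀ i < n, Move H (f i) (f (i + 1))}

/-! Writing `d(x', x) = ∑ i, (x' i - x i)`, a play from `x'` is replayed from `x` move by move: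
a move of `x'` on an edge `E` is copied from `x` when `x` is still above its target on all of `E`
(and `d` does not grow); otherwise it is skipped, and then `d` drops by at least one. So every
play from `x'` loses at most `d(x', x)` moves when replayed from `x`. -/

section Play

variable {V : Type*} {H : Set (Set V)}

def HasPlay (H : Set (Set V)) (x : V → ℕ) (n : ℕ) : Prop :=
  ∃ f : ℕ → V → ℕ, f 0 = x ∧ ∀ i < n, Move H (f i) (f (i + 1))

theorem height_eq_sSup (x : V → ℕ) : height H x = sSup {n | HasPlay H x n} := rfl

theorem hasPlay_zero (x : V → ℕ) : HasPlay H x 0 :=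
  ⟨fun _ => x, rfl, fun _ h => absurd h (Nat.not_lt_zero _)⟩

theorem hasPlay_succ_iff {x : V → ℕ} {n : ℕ} :
    HasPlay H x (n + 1) ↔ ∃ y, Move H x y ∧ HasPlay H y n := by
  constructor
  · rintro ⟨f, rfl, hf⟩
    exact ⟨f 1, hf 0 n.succ_pos, fun i => f (i + 1), rfl, fun i hi => hf (i + 1) (by omega)⟩
  · rintro ⟨y, hxy, g, rfl, hg⟩
    refine ⟨fun | 0 => x | i + 1 => g i, rfl, ?_⟩
    rintro (_ | i) hi
    · exact hxy
    · exact hg i (by omega)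

theorem Move.le {x y : V → ℕ} (h : Move H x y) : y ≤ x := by
  obtain ⟨E, -, hlt, heq⟩ := h
  intro i
  by_cases hi : i ∈ E
  · exact (hlt i hi).le
  · exact (heq i hi).le

section Fintype

variable [Fintype V]

theorem Move.sum_lt (hne : ∅ ∉ H) {x y : V → ℕ} (h : Move H x y) :
    ∑ i, y i < ∑ i, x i := by
  have hle := h.le
  obtain ⟨E, hE, hlt, -⟩ := h
  obtain ⟨v, hv⟩ : E.Nonempty := Set.nonempty_iff_ne_empty.2 fun h => hne (h ▸ hE)
  exact Finset.sum_lt_sum (fun i _ => hle i) ⟨v, Finset.mem_univ v, hlt v hv⟩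

theorem HasPlay.le_sum (hne : ∅ ∉ H) {x : V → ℕ} {n : ℕ} (h : HasPlay H x n) :
    n ≤ ∑ i, x i := by
  induction n generalizing x with
  | zero => exact Nat.zero_le _
  | succ n ih =>
    obtain ⟨y, hxy, hy⟩ := hasPlay_succ_iff.1 h
    have := ih hy
    have := hxy.sum_lt hne
    omega

theorem bddAbove_hasPlay (hne : ∅ ∉ H) (x : V → ℕ) : BddAbove {n | HasPlay H x n} :=
  ⟨∑ i, x i, fun _ hn => hn.le_sum hne⟩

theorem Move.exists_move_or_sum_tsub_lt {x x' y' : V → ℕ} (h : Move H x' y') :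
    (∃ y, Move H x y ∧ ∑ i, (y' i - y i) ≤ ∑ i, (x' i - x i)) ∨
      ∑ i, (y' i - x i) < ∑ i, (x' i - x i) := by
  classical
  have hle := h.le
  obtain ⟨E, hE, hlt, heq⟩ := h
  by_cases hcopy : ∀ j ∈ E, y' j < x j
  · left
    refine ⟨fun j => if j ∈ E then y' j else x j, ⟨E, hE, fun j hj => ?_, fun j hj => ?_⟩, ?_⟩
    · simpa [hj] using hcopy j hj
    · simp [hj]
    · refine Finset.sum_le_sum fun j _ => ?_
      by_cases hj : j ∈ E
      · simp [hj]
      · simp [hj, heq j hj]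
  · right
    push Not at hcopy
    obtain ⟨j, hjE, hj⟩ := hcopy
    refine Finset.sum_lt_sum (fun i _ => Nat.sub_le_sub_right (hle i) _) ⟨j, Finset.mem_univ j, ?_⟩
    have := hlt j hjE
    omega

theorem HasPlay.exists_hasPlay_add_sum_tsub_ge {x x' : V → ℕ} {n : ℕ} (h : HasPlay H x' n) :
    ∃ m, HasPlay H x m ∧ n ≤ m + ∑ i, (x' i - x i) := by
  induction n generalizing x x' with
  | zero => exact ⟨0, hasPlay_zero x, Nat.zero_le _⟩
  | succ n ih =>
    obtain ⟨y', hx'y', hy'⟩ := hasPlay_succ_iff.1 h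
    rcases hx'y'.exists_move_or_sum_tsub_lt (x := x) with ⟨y, hxy, hd⟩ | hd
    · obtain ⟨m, hm, hnm⟩ := ih (x := y) hy'
      exact ⟨m + 1, hasPlay_succ_iff.2 ⟨y, hxy, hm⟩, by omega⟩
    · obtain ⟨m, hm, hnm⟩ := ih (x := x) hy'
      exact ⟨m, hm, by omega⟩

theorem height_le_height_add_sum_tsub (hne : ∅ ∉ H) (x x' : V → ℕ) :
    height H x' ≤ height H x + ∑ i, (x' i - x i) := by
  rw [height_eq_sSup, height_eq_sSup]
  refine csSup_le ⟨0, hasPlay_zero x'⟩ fun n hn => ?_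
  obtain ⟨m, hm, hnm⟩ := hn.exists_hasPlay_add_sum_tsub_ge (x := x)
  have := le_csSup (bddAbove_hasPlay hne x) hm
  omega

end Fintype

end Play

theorem stmt_7_general {V : Type*} [Fintype V] (H : Set (Set V))
    (hne : ∅ ∉ H) :
    (∀ x x' : V → ℕ, height H x' ≤ height H x + ∑ i, (x' i - x i)) ∧
    (∀ x x' : V → ℕ, x' ≤ x → height H x' ≤ height H x) := by
  refine ⟨height_le_height_add_sum_tsub hne, fun x x' hle => ?_⟩
  have hd : ∑ i, (x' i - x i) = 0 :=
    Finset.sum_eq_zero fun i _ => Nat.sub_eq_zero_of_le (hle i)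
  simpa [hd] using height_le_height_add_sum_tsub hne x x'

/-- `h(x) ≥ h(x') − ‖x'−x‖₊` where `‖x'−x‖₊ = Σ_{i : x'_i > x_i} (x'_i − x_i)`
(truncated subtraction); in particular `h` is monotone. -/
theorem stmt_7 {V : Type*} [Fintype V] (H : Set (Set V))
    (hne : ∅ ∉ H) (hcov : ∀ v : V, ∃ E ∈ H, v ∈ E) :
    (∀ x x' : V → ℕ, height H x' ≤ height H x + ∑ i, (x' i - x i)) ∧
    (∀ x x' : V → ℕ, x' ≤ x → height H x' ≤ height H x) :=
  stmt_7_general H hne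
end

section
/- Let H₁ ⊆ 2^{V₁} and H₂ ⊆ 2^{V₂} be minimal transversal-free hypergraphs on disjoint vertex sets V₁, V₂ (with nonempty edges, every vertex covered). Then the conjunctive compound H = H₁ ⊗ H₂ = {A ∪ B : A ∈ H₁, B ∈ H₂} is minimal transversal-free: H is transversal-free, and for every proper subset S ⊊ V₁ ∪ V₂ with H_S ≠ ∅, the induced subhypergraph H_S = {E ∈ H : E ⊆ S} has a transversal edge. -/
/-- A hypergraph is transversal-free if every edge is disjoint from some edge. -/
def TransversalFree {α : Type*} (H : Set (Set α)) : Prop :=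
  ∀ E ∈ H, ∃ E' ∈ H, E ∩ E' = ∅

/-- The induced subhypergraph on a vertex subset `S`. -/
def Induced {α : Type*} (H : Set (Set α)) (S : Set α) : Set (Set α) :=
  {E ∈ H | E ⊆ S}

/-- A transversal edge of a hypergraph: an edge meeting all edges. -/
def HasTransversalEdge {α : Type*} (H : Set (Set α)) : Prop :=
  ∃ T ∈ H, ∀ E ∈ H, (T ∩ E).Nonempty

/-- Minimal transversal-free hypergraph on vertex set `V`. -/
def MinimalTransversalFree {α : Type*} (H : Set (Set α)) (V : Set α) : Prop :=
  TransversalFree H ∧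
    ∀ S : Set α, S ⊂ V → (Induced H S).Nonempty → HasTransversalEdge (Induced H S)

/-- The conjunctive compound of two hypergraphs. -/
def ConjCompound {α : Type*} (H₁ H₂ : Set (Set α)) : Set (Set α) :=
  {E | ∃ A ∈ H₁, ∃ B ∈ H₂, E = A ∪ B}

/-! Transversal-freeness passes to the compound by taking `A' ∪ B'` with `A'` missing `A` and
`B'` missing `B`; the vertex sets being disjoint, `A'` also misses `B` and `B'` misses `A`.
For minimality, a proper subset `S` of `V₁ ∪ V₂` misses a vertex of, say, `V₁`, so `H₁`
restricted to `S` has a transversal edge `T₁`; then `T₁ ∪ T₂`, for any edge `T₂ ⊆ S` of `H₂`,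
is a transversal edge of the compound restricted to `S`. -/

section ConjCompound

variable {α : Type*} {H H₁ H₂ : Set (Set α)} {S V V₁ V₂ : Set α}

theorem union_mem_conjCompound {A B : Set α} (hA : A ∈ H₁) (hB : B ∈ H₂) :
    A ∪ B ∈ ConjCompound H₁ H₂ :=
  ⟨A, hA, B, hB, rfl⟩

theorem conjCompound_comm (H₁ H₂ : Set (Set α)) : ConjCompound H₁ H₂ = ConjCompound H₂ H₁ := by
  ext E
  constructor <;>
  · rintro ⟨A, hA, B, hB, rfl⟩
    exact ⟨B, hB, A, hA, Set.union_comm A B⟩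

theorem TransversalFree.conjCompound (h₁ : TransversalFree H₁) (h₂ : TransversalFree H₂)
    (hsep : ∀ A ∈ H₁, ∀ B ∈ H₂, Disjoint A B) : TransversalFree (ConjCompound H₁ H₂) := by
  rintro E ⟨A, hA, B, hB, rfl⟩
  obtain ⟨A', hA', hAA'⟩ := h₁ A hA
  obtain ⟨B', hB', hBB'⟩ := h₂ B hB
  refine ⟨A' ∪ B', union_mem_conjCompound hA' hB', ?_⟩
  rw [← Set.disjoint_iff_inter_eq_empty] at hAA' hBB' ⊢
  exact Set.disjoint_union_left.2
    ⟨Set.disjoint_union_right.2 ⟨hAA', hsep A hA B' hB'⟩,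
      Set.disjoint_union_right.2 ⟨(hsep A' hA' B hB).symm, hBB'⟩⟩

theorem induced_conjCompound_nonempty (h : (Induced (ConjCompound H₁ H₂) S).Nonempty) :
    (Induced H₁ S).Nonempty ∧ (Induced H₂ S).Nonempty := by
  obtain ⟨_, ⟨A, hA, B, hB, rfl⟩, hAB⟩ := h
  exact ⟨⟨A, hA, Set.union_subset_iff.1 hAB |>.1⟩, ⟨B, hB, Set.union_subset_iff.1 hAB |>.2⟩⟩

theorem HasTransversalEdge.induced_conjCompound (h₁ : HasTransversalEdge (Induced H₁ S))
    (h₂ : (Induced H₂ S).Nonempty) : HasTransversalEdge (Induced (ConjCompound H₁ H₂) S) := by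
  obtain ⟨T₁, ⟨hT₁, hT₁S⟩, hmeet⟩ := h₁
  obtain ⟨T₂, hT₂, hT₂S⟩ := h₂
  refine ⟨T₁ ∪ T₂, ⟨union_mem_conjCompound hT₁ hT₂, Set.union_subset hT₁S hT₂S⟩, ?_⟩
  rintro _ ⟨⟨A, hA, B, hB, rfl⟩, hABS⟩
  obtain ⟨x, hxT₁, hxA⟩ := hmeet A ⟨hA, (Set.union_subset_iff.1 hABS).1⟩
  exact ⟨x, Or.inl hxT₁, Or.inl hxA⟩

theorem induced_inter_eq (hV : ⋃₀ H ⊆ V) (S : Set α) : Induced H (S ∩ V) = Induced H S := by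
  ext E
  exact ⟨fun ⟨hE, hES⟩ => ⟨hE, hES.trans Set.inter_subset_left⟩,
    fun ⟨hE, hES⟩ => ⟨hE, Set.subset_inter hES ((Set.subset_sUnion_of_mem hE).trans hV)⟩⟩

theorem MinimalTransversalFree.hasTransversalEdge_induced (h : MinimalTransversalFree H V)
    (hV : ⋃₀ H ⊆ V) (hS : S ∩ V ⊂ V) (hne : (Induced H S).Nonempty) :
    HasTransversalEdge (Induced H S) := by
  rw [← induced_inter_eq hV] at hne ⊢
  exact h.2 _ hS hne

theorem inter_ssubset_or_inter_ssubset_of_ssubset_union (hS : S ⊂ V₁ ∪ V₂) :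
    S ∩ V₁ ⊂ V₁ ∨ S ∩ V₂ ⊂ V₂ := by
  simp only [Set.inter_ssubset_right_iff]
  by_contra! h
  exact hS.not_subset (Set.union_subset h.1 h.2)

end ConjCompound

theorem stmt_11_general {α : Type*} (V₁ V₂ : Set α) (hdis : Disjoint V₁ V₂)
    (H₁ H₂ : Set (Set α))
    (hcov₁ : ⋃₀ H₁ = V₁) (hcov₂ : ⋃₀ H₂ = V₂)
    (hmtf₁ : MinimalTransversalFree H₁ V₁) (hmtf₂ : MinimalTransversalFree H₂ V₂) :
    MinimalTransversalFree (ConjCompound H₁ H₂) (V₁ ∪ V₂) := by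
  refine ⟨hmtf₁.1.conjCompound hmtf₂.1 fun A hA B hB => ?_, fun S hS hne => ?_⟩
  · exact hdis.mono (hcov₁ ▸ Set.subset_sUnion_of_mem hA) (hcov₂ ▸ Set.subset_sUnion_of_mem hB)
  obtain ⟨hne₁, hne₂⟩ := induced_conjCompound_nonempty hne
  rcases inter_ssubset_or_inter_ssubset_of_ssubset_union hS with hS₁ | hS₂
  · exact (hmtf₁.hasTransversalEdge_induced hcov₁.le hS₁ hne₁).induced_conjCompound hne₂
  · rw [conjCompound_comm]
    exact (hmtf₂.hasTransversalEdge_induced hcov₂.le hS₂ hne₂).induced_conjCompound hne₁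

/-- The conjunctive compound of minimal transversal-free hypergraphs on disjoint
vertex sets (nonempty edges, all vertices covered) is minimal transversal-free. -/
theorem stmt_11 {α : Type*} (V₁ V₂ : Set α) (hdis : Disjoint V₁ V₂)
    (H₁ H₂ : Set (Set α))
    (hne₁ : ∅ ∉ H₁) (hne₂ : ∅ ∉ H₂)
    (hcov₁ : ⋃₀ H₁ = V₁) (hcov₂ : ⋃₀ H₂ = V₂)
    (hmtf₁ : MinimalTransversalFree H₁ V₁) (hmtf₂ : MinimalTransversalFree H₂ V₂) :
    MinimalTransversalFree (ConjCompound H₁ H₂) (V₁ ∪ V₂) :=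
  stmt_11_general V₁ V₂ hdis H₁ H₂ hcov₁ hcov₂ hmtf₁ hmtf₂
end

section
/- Let H₁ ⊆ 2^{V₁} and H₂ ⊆ 2^{V₂} be hypergraphs on disjoint vertex sets satisfying the chain property. Then their conjunctive compound H₁ ⊗ H₂ = {A ∪ B : A ∈ H₁, B ∈ H₂} also satisfies the chain property. -/
/-! The chains of the two factors are run one after the other: first a chain from `A` to `A'`
in `H₁` with `B` adjoined to every edge, then a chain from `B` to `B'` in `H₂` with `A'`
adjoined. As the vertex sets are disjoint, adjoining a fixed edge of the other factor neither
hides nor adds new vertices, so every step stays a chain step. -/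

/-- The chain property: any two distinct edges `E ≠ E'` of `H` are connected by
a sequence `C 0 = E, ..., C q = E'` of edges of `H` such that consecutive edges
intersect, each edge adds exactly one new vertex to the previous one, and all
edges of the chain are contained in `E ∪ E'`. -/
def ChainProperty {α : Type*} (H : Set (Set α)) : Prop :=
  ∀ E ∈ H, ∀ E' ∈ H, E ≠ E' →
    ∃ (q : ℕ) (C : ℕ → Set α),
      C 0 = E ∧ C q = E' ∧ (∀ i ≤ q, C i ∈ H) ∧
      ∀ i < q, (C (i + 1) ∩ C i).Nonempty ∧
        (∃ a, C (i + 1) \ C i = {a}) ∧ C i ⊆ E ∪ E'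

namespace Hypergraph

variable {α : Type*}

/-- The body of `ChainProperty` with `E ∪ E'` generalized to `S`; note that the last edge
`C q` need not lie in `S`. -/
def IsChain (H : Set (Set α)) (S : Set α) (q : ℕ) (C : ℕ → Set α) : Prop :=
  (∀ i ≤ q, C i ∈ H) ∧
    ∀ i < q, (C (i + 1) ∩ C i).Nonempty ∧ (∃ a, C (i + 1) \ C i = {a}) ∧ C i ⊆ S

lemma isChain_const {H : Set (Set α)} {E : Set α} (hE : E ∈ H) (S : Set α) :
    IsChain H S 0 (fun _ => E) :=
  ⟨fun _ _ => hE, fun _ hi => absurd hi (Nat.not_lt_zero _)⟩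

lemma _root_.ChainProperty.exists_isChain {H : Set (Set α)} (hH : ChainProperty H)
    {E E' : Set α} (hE : E ∈ H) (hE' : E' ∈ H) :
    ∃ (q : ℕ) (C : ℕ → Set α), C 0 = E ∧ C q = E' ∧ IsChain H (E ∪ E') q C := by
  by_cases h : E = E'
  · exact ⟨0, fun _ => E, rfl, h, isChain_const hE _⟩
  · exact hH E hE E' hE' h

lemma IsChain.mono {H : Set (Set α)} {S T : Set α} {q : ℕ} {C : ℕ → Set α}
    (hC : IsChain H S q C) (hST : S ⊆ T) : IsChain H T q C :=
  ⟨hC.1, fun i hi => (hC.2 i hi).imp_right fun h => h.imp_right fun hS => hS.trans hST⟩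

lemma union_diff_union_of_disjoint {X Y B : Set α} (hXB : Disjoint X B) :
    (X ∪ B) \ (Y ∪ B) = X \ Y := by
  ext x
  simp only [Set.mem_sdiff, Set.mem_union, not_or]
  exact ⟨fun ⟨hx, hY, hB⟩ => ⟨hx.resolve_right hB, hY⟩,
    fun ⟨hX, hY⟩ => ⟨Or.inl hX, hY, Set.disjoint_left.mp hXB hX⟩⟩

lemma IsChain.union_right {H H' : Set (Set α)} {S B : Set α} {q : ℕ} {C : ℕ → Set α}
    (hC : IsChain H S q C) (hmem : ∀ X ∈ H, X ∪ B ∈ H') (hdisj : ∀ X ∈ H, Disjoint X B) :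
    IsChain H' (S ∪ B) q (fun i => C i ∪ B) := by
  refine ⟨fun i hi => hmem _ (hC.1 i hi), fun i hi => ?_⟩
  obtain ⟨hmeet, ⟨a, ha⟩, hS⟩ := hC.2 i hi
  refine ⟨hmeet.mono (Set.inter_subset_inter Set.subset_union_left Set.subset_union_left),
    ⟨a, ?_⟩, Set.union_subset_union_left B hS⟩
  rw [union_diff_union_of_disjoint (hdisj _ (hC.1 _ hi)), ha]

lemma IsChain.union_left {H H' : Set (Set α)} {S B : Set α} {q : ℕ} {C : ℕ → Set α}
    (hC : IsChain H S q C) (hmem : ∀ X ∈ H, B ∪ X ∈ H') (hdisj : ∀ X ∈ H, Disjoint B X) :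
    IsChain H' (B ∪ S) q (fun i => B ∪ C i) := by
  simpa only [Set.union_comm B] using
    hC.union_right (fun X hX => Set.union_comm X B ▸ hmem X hX) fun X hX => (hdisj X hX).symm

lemma IsChain.append {H : Set (Set α)} {S : Set α} {q₁ q₂ : ℕ} {C D : ℕ → Set α}
    (hC : IsChain H S q₁ C) (hD : IsChain H S q₂ D) (hCD : C q₁ = D 0) :
    ∃ F : ℕ → Set α, F 0 = C 0 ∧ F (q₁ + q₂) = D q₂ ∧ IsChain H S (q₁ + q₂) F := by
  set F : ℕ → Set α := fun i => if i ≤ q₁ then C i else D (i - q₁)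
  have hF_le : ∀ i ≤ q₁, F i = C i := fun i hi => if_pos hi
  have hF_ge : ∀ i, q₁ ≤ i → F i = D (i - q₁) := by
    intro i hi
    rcases hi.eq_or_lt with rfl | hlt
    · rw [hF_le _ le_rfl, hCD, Nat.sub_self]
    · exact if_neg (Nat.not_le.mpr hlt)
  refine ⟨F, hF_le 0 (Nat.zero_le _),
    by rw [hF_ge _ (Nat.le_add_right _ _), Nat.add_sub_cancel_left], fun i hi => ?_, fun i hi => ?_⟩
  · rcases le_total i q₁ with h | h
    · exact hF_le i h ▸ hC.1 i h
    · exact hF_ge i h ▸ hD.1 _ (by omega)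
  · rcases lt_or_ge i q₁ with h | h
    · rw [hF_le i h.le, hF_le (i + 1) h]
      exact hC.2 i h
    · rw [hF_ge i h, hF_ge (i + 1) (by omega), Nat.sub_add_comm h]
      exact hD.2 _ (by omega)

end Hypergraph

/-- The conjunctive compound of two hypergraphs with the chain property, on
disjoint vertex sets, also has the chain property. -/
theorem stmt_12 {α : Type*} (V₁ V₂ : Set α) (hdis : Disjoint V₁ V₂)
    (H₁ H₂ : Set (Set α))
    (hs₁ : ∀ A ∈ H₁, A ⊆ V₁) (hs₂ : ∀ B ∈ H₂, B ⊆ V₂)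
    (hc₁ : ChainProperty H₁) (hc₂ : ChainProperty H₂) :
    ChainProperty (ConjCompound H₁ H₂) := by
  rintro _ ⟨A, hA, B, hB, rfl⟩ _ ⟨A', hA', B', hB', rfl⟩ -
  obtain ⟨q₁, C, hC0, hCq, hC⟩ := hc₁.exists_isChain hA hA'
  obtain ⟨q₂, D, hD0, hDq, hD⟩ := hc₂.exists_isChain hB hB'
  have hC' := hC.union_right (H' := ConjCompound H₁ H₂) (fun X hX => ⟨X, hX, B, hB, rfl⟩)
    fun X hX => hdis.mono (hs₁ X hX) (hs₂ B hB)
  have hD' := hD.union_left (H' := ConjCompound H₁ H₂) (fun X hX => ⟨A', hA', X, hX, rfl⟩)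
    fun X hX => hdis.mono (hs₁ A' hA') (hs₂ X hX)
  have hS₁ : A ∪ A' ∪ B ⊆ (A ∪ B) ∪ (A' ∪ B') := by
    intro x; simp only [Set.mem_union]; tauto
  have hS₂ : A' ∪ (B ∪ B') ⊆ (A ∪ B) ∪ (A' ∪ B') := by
    intro x; simp only [Set.mem_union]; tauto
  obtain ⟨F, hF0, hFq, hF⟩ := (hC'.mono hS₁).append (hD'.mono hS₂) (by simp only [hCq, hD0])
  exact ⟨q₁ + q₂, F, by simp only [hF0, hC0], by simp only [hFq, hDq], hF⟩
end
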